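/- arXiv:2105.04486 — 3 statements merged into one kernel-verified Lean document; each statement's English description precedes it below -/
import Mathlib

section
/- Let D be a finite set equipped with a score function S : D → ℝ and let k be a positive integer with k ≤ |D|. Let D_l ⊆ D, and let A_l ⊆ D_l be a subset with |A_l| = k such that S(a) ≥ S(b) for every a ∈ A_l and every b ∈ D_l \ A_l (i.e., A_l is a top-k answer set of D_l). Then for every t ∈ D_l \ A_l there exists a top-k answer set A of D with t ∉ A; that is, any element of D_l not in A_l can be safely pruned. -/
/-- `A` is a top-`k` answer set of `D` w.r.t. score function `S`:
`A ⊆ D`, `|A| = k`, and every element of `A` scores at least as high as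
every element of `D \ A`. -/
def IsTopK {α : Type*} [DecidableEq α] (S : α → ℝ) (D : Finset α) (k : ℕ)
    (A : Finset α) : Prop :=
  A ⊆ D ∧ A.card = k ∧ ∀ a ∈ A, ∀ b ∈ D \ A, S b ≤ S a

/-
Take any top-k answer set `A₀` of `D`. If `t ∉ A₀` we are done. Otherwise `A₀` cannot contain
all of `A_l ∪ {t}`, which has `k + 1` elements, so some `a ∈ A_l` lies outside `A₀`. Then
`S t ≤ S a` because `A_l` is top-k in `D_l`, and `S a ≤ S t` because `A₀` is top-k in `D`;
swapping `t` for `a` in `A₀` yields a top-k answer set of `D` avoiding `t`.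
-/

namespace IsTopK

variable {α : Type*} [DecidableEq α] {S : α → ℝ} {D A : Finset α} {k : ℕ}

theorem insert_of_forall_le {m : α} (hmD : m ∈ D) (hm : ∀ b ∈ D, S b ≤ S m)
    (hA : IsTopK S (D.erase m) k A) : IsTopK S D (k + 1) (insert m A) := by
  obtain ⟨hAsub, hAcard, hAtop⟩ := hA
  have hmA : m ∉ A := fun h => (Finset.mem_erase.mp (hAsub h)).1 rfl
  refine ⟨Finset.insert_subset hmD (hAsub.trans (Finset.erase_subset m D)), ?_, ?_⟩
  · rw [Finset.card_insert_of_notMem hmA, hAcard]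
  · intro a ha b hb
    obtain ⟨hbD, hbA⟩ := Finset.mem_sdiff.mp hb
    rw [Finset.mem_insert] at ha
    rw [Finset.mem_insert, not_or] at hbA
    rcases ha with rfl | ha
    · exact hm b hbD
    · exact hAtop a ha b (Finset.mem_sdiff.mpr ⟨Finset.mem_erase.mpr ⟨hbA.1, hbD⟩, hbA.2⟩)

theorem insert_erase {t a : α} (hA : IsTopK S D k A) (ht : t ∈ A) (haD : a ∈ D) (haA : a ∉ A)
    (hta : S t ≤ S a) : IsTopK S D k (insert a (A.erase t)) := by
  obtain ⟨hAsub, hAcard, hAtop⟩ := hA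
  have haA' : a ∉ A.erase t := fun h => haA (Finset.mem_of_mem_erase h)
  have hAa : ∀ x ∈ A, S a ≤ S x := fun x hx => hAtop x hx a (Finset.mem_sdiff.mpr ⟨haD, haA⟩)
  refine ⟨Finset.insert_subset haD ((Finset.erase_subset t A).trans hAsub), ?_, ?_⟩
  · rw [Finset.card_insert_of_notMem haA', Finset.card_erase_of_mem ht, hAcard]
    have : 0 < k := hAcard ▸ Finset.card_pos.mpr ⟨t, ht⟩
    omega
  · intro x hx b hb
    obtain ⟨hbD, hbA'⟩ := Finset.mem_sdiff.mp hb
    simp only [Finset.mem_insert, Finset.mem_erase, not_or, not_and] at hbA'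
    have hb : S b ≤ S a := by
      by_cases hbt : b = t
      · exact hbt ▸ hta
      · exact (hAtop t ht b (Finset.mem_sdiff.mpr ⟨hbD, hbA'.2 hbt⟩)).trans hta
    rcases Finset.mem_insert.mp hx with rfl | hx
    · exact hb
    · exact hb.trans (hAa x (Finset.mem_of_mem_erase hx))

end IsTopK

theorem exists_isTopK {α : Type*} [DecidableEq α] (S : α → ℝ) {k : ℕ} :
    ∀ {D : Finset α}, k ≤ D.card → ∃ A, IsTopK S D k A := by
  induction k with
  | zero => exact fun _ => ⟨∅, by simp [IsTopK]⟩
  | succ n ih =>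
    intro D hk
    obtain ⟨m, hmD, hm⟩ := Finset.exists_max_image D S (Finset.card_pos.mp (by omega))
    obtain ⟨A, hA⟩ := ih (D := D.erase m) (by rw [Finset.card_erase_of_mem hmD]; omega)
    exact ⟨insert m A, hA.insert_of_forall_le hmD hm⟩

theorem stmt_0_general {α : Type*} [DecidableEq α] (S : α → ℝ) (D : Finset α)
    (k : ℕ) (hkD : k ≤ D.card)
    (Dl Al : Finset α) (hDl : Dl ⊆ D) (hAlsub : Al ⊆ Dl) (hAlcard : Al.card = k)
    (hAltop : ∀ a ∈ Al, ∀ b ∈ Dl \ Al, S b ≤ S a) :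
    ∀ t ∈ Dl \ Al, ∃ A : Finset α, IsTopK S D k A ∧ t ∉ A := by
  intro t ht
  obtain ⟨A₀, hA₀⟩ := exists_isTopK S hkD
  by_cases htA₀ : t ∈ A₀
  swap
  · exact ⟨A₀, hA₀, htA₀⟩
  have hAl_not_sub : ¬ Al ⊆ A₀ := fun hsub => by
    have := Finset.card_le_card (Finset.insert_subset htA₀ hsub)
    rw [Finset.card_insert_of_notMem (Finset.mem_sdiff.mp ht).2, hAlcard, hA₀.2.1] at this
    omega
  obtain ⟨a, haAl, haA₀⟩ := Finset.not_subset.mp hAl_not_sub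
  refine ⟨_, hA₀.insert_erase htA₀ (hDl (hAlsub haAl)) haA₀ (hAltop a haAl t ht), ?_⟩
  rw [Finset.mem_insert, Finset.mem_erase]
  rintro (rfl | ⟨hne, -⟩)
  · exact (Finset.mem_sdiff.mp ht).2 haAl
  · exact hne rfl

/-- any element of `D_l` not in the local top-k answer set `A_l`
can be safely pruned: it is outside some top-k answer set of `D`. -/
theorem stmt_0 {α : Type*} [DecidableEq α] (S : α → ℝ) (D : Finset α)
    (k : ℕ) (hk : 0 < k) (hkD : k ≤ D.card)
    (Dl Al : Finset α) (hDl : Dl ⊆ D) (hAlsub : Al ⊆ Dl) (hAlcard : Al.card = k)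
    (hAltop : ∀ a ∈ Al, ∀ b ∈ Dl \ Al, S b ≤ S a) :
    ∀ t ∈ Dl \ Al, ∃ A : Finset α, IsTopK S D k A ∧ t ∉ A :=
  stmt_0_general S D k hkD Dl Al hDl hAlsub hAlcard hAltop
end

section
/- Let D be a finite set equipped with a score function S : D → ℝ, let k be a positive integer with k ≤ |D|, and let τ_1, …, τ_N be real numbers. Suppose that for each l ∈ {1,…,N} there exist k pairwise distinct elements t of D with S(t) ≥ τ_l. Then every o ∈ D with S(o) < max_{1≤l≤N} τ_l belongs to no top-k answer set of D; that is, the maximum of the per-partition pruning thresholds is itself a valid pruning threshold. -/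
theorem IsTopK.le_score_of_card_le {α : Type*} [DecidableEq α] {S : α → ℝ} {D : Finset α}
    {k : ℕ} {A T : Finset α} (hA : IsTopK S D k A) (hTD : T ⊆ D) (hkT : k ≤ T.card) {τ : ℝ}
    (hT : ∀ c ∈ T, τ ≤ S c) {a : α} (ha : a ∈ A) : τ ≤ S a := by
  obtain ⟨-, hAk, hAtop⟩ := hA
  by_cases hTA : T ⊆ A
  · have hTeq : T = A := Finset.eq_of_subset_of_card_le hTA (hAk ▸ hkT)
    exact hT a (hTeq ▸ ha)
  · obtain ⟨t, htT, htA⟩ := Finset.not_subset.mp hTA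
    exact (hT t htT).trans (hAtop a ha t (Finset.mem_sdiff.mpr ⟨hTD htT, htA⟩))

theorem stmt_9_general {α : Type*} [DecidableEq α] (S : α → ℝ) (D : Finset α)
    (k : ℕ)
    (N : ℕ) (hN : 0 < N) (τ : Fin N → ℝ)
    (hcand : ∀ l : Fin N, ∃ T : Finset α, T ⊆ D ∧ T.card = k ∧ ∀ c ∈ T, τ l ≤ S c) :
    ∀ o ∈ D,
      S o < Finset.univ.sup' (Finset.univ_nonempty_iff.mpr ⟨⟨0, hN⟩⟩) τ →
        ∀ A : Finset α, IsTopK S D k A → o ∉ A := by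
  intro o _ ho A hA hoA
  obtain ⟨l, -, hl⟩ := Finset.exists_mem_eq_sup' (Finset.univ_nonempty_iff.mpr ⟨⟨0, hN⟩⟩) τ
  obtain ⟨T, hTD, hTk, hT⟩ := hcand l
  exact (hl ▸ ho).not_ge (hA.le_score_of_card_le hTD hTk.ge hT hoA)

/-- if for each partition threshold `τ l` there are `k` pairwise
distinct elements of `D` with score at least `τ l`, then any `o ∈ D` scoring
below `max_l τ l` belongs to no top-k answer set of `D`. -/
theorem stmt_9 {α : Type*} [DecidableEq α] (S : α → ℝ) (D : Finset α)
    (k : ℕ) (hk : 0 < k) (hkD : k ≤ D.card)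
    (N : ℕ) (hN : 0 < N) (τ : Fin N → ℝ)
    (hcand : ∀ l : Fin N, ∃ T : Finset α, T ⊆ D ∧ T.card = k ∧ ∀ c ∈ T, τ l ≤ S c) :
    ∀ o ∈ D,
      S o < Finset.univ.sup' (Finset.univ_nonempty_iff.mpr ⟨⟨0, hN⟩⟩) τ →
        ∀ A : Finset α, IsTopK S D k A → o ∉ A :=
  stmt_9_general S D k N hN τ hcand
end

section
/- Let D be a finite set equipped with a score function S : D → ℝ and let k be a positive integer with k ≤ |D|. Let C ⊆ D be a candidate set together with a real number LB(c) ≤ S(c) for each c ∈ C, and let τ ∈ ℝ be such that at least k elements c ∈ C satisfy LB(c) ≥ τ (i.e., τ does not exceed the k-th largest lower bound among the candidates). Then every o ∈ D with S(o) < τ belongs to no top-k answer set of D. -/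
open scoped Classical

namespace IsTopK

variable {α : Type*} [DecidableEq α] {S : α → ℝ} {D A F : Finset α} {k : ℕ} {a : α}

theorem card_lt_of_forall_lt (hA : IsTopK S D k A) (ha : a ∈ A) (hFD : F ⊆ D)
    (hF : ∀ f ∈ F, S a < S f) : F.card < k := by
  obtain ⟨-, hAk, htop⟩ := hA
  have hFA : F ⊆ A.erase a := fun f hf => by
    refine Finset.mem_erase.mpr ⟨fun hfa => (hF f hf).ne' (congrArg S hfa), ?_⟩
    by_contra hfA
    exact (htop a ha f (Finset.mem_sdiff.mpr ⟨hFD hf, hfA⟩)).not_gt (hF f hf)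
  calc F.card ≤ (A.erase a).card := Finset.card_le_card hFA
    _ < A.card := Finset.card_erase_lt_of_mem ha
    _ = k := hAk

theorem le_score_of_le_card (hA : IsTopK S D k A) (hFD : F ⊆ D) (hFk : k ≤ F.card)
    {τ : ℝ} (hF : ∀ f ∈ F, τ ≤ S f) (ha : a ∈ A) : τ ≤ S a := by
  by_contra! hlt
  exact (hA.card_lt_of_forall_lt ha hFD fun f hf => hlt.trans_le (hF f hf)).not_ge hFk

end IsTopK

theorem stmt_14_general {α : Type*} [DecidableEq α] (S : α → ℝ) (D : Finset α)
    (k : ℕ)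
    (C : Finset α) (hC : C ⊆ D)
    (LB : α → ℝ) (hLB : ∀ c ∈ C, LB c ≤ S c)
    (τ : ℝ) (hτ : k ≤ (C.filter (fun c => τ ≤ LB c)).card) :
    ∀ o ∈ D, S o < τ → ∀ A : Finset α, IsTopK S D k A → o ∉ A := by
  intro o _ ho A hA hoA
  have hFD : C.filter (fun c => τ ≤ LB c) ⊆ D := (Finset.filter_subset _ C).trans hC
  have hF : ∀ f ∈ C.filter (fun c => τ ≤ LB c), τ ≤ S f := fun f hf =>
    (Finset.mem_filter.mp hf).2.trans (hLB f (Finset.mem_filter.mp hf).1)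
  exact (hA.le_score_of_le_card hFD hτ hF hoA).not_gt ho

/-- if at least `k` candidates in `C ⊆ D` have score lower
bounds at least `τ`, then any `o ∈ D` with `S o < τ` belongs to no top-k
answer set of `D`. -/
theorem stmt_14 {α : Type*} [DecidableEq α] (S : α → ℝ) (D : Finset α)
    (k : ℕ) (hk : 0 < k) (hkD : k ≤ D.card)
    (C : Finset α) (hC : C ⊆ D)
    (LB : α → ℝ) (hLB : ∀ c ∈ C, LB c ≤ S c)
    (τ : ℝ) (hτ : k ≤ (C.filter (fun c => τ ≤ LB c)).card) :
    ∀ o ∈ D, S o < τ → ∀ A : Finset α, IsTopK S D k A → o ∉ A :=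
  stmt_14_general S D k C hC LB hLB τ hτ
end
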